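/- For any sequence (nᵢ)_{i∈ℕ} of positive integers, there exists an irrational β ∈ ℝ such that ‖nᵢβ‖ > 1/3 for infinitely many i ∈ ℕ, where ‖·‖ is the distance to the nearest integer. -/

import Mathlib

open Function Metric Set Filter

noncomputable section

abbrev Torus := AddCircle (1 : ℝ)

/-- `A ⊆ ℕ` is a Bohr₀ set: it contains all positive `n` with `‖nα‖ < δ`
for some `δ > 0`, `d ∈ ℕ`, `α ∈ 𝕋^d` (L¹ distance to zero). -/
def IsBohr0 (A : Set ℕ) : Prop :=
  ∃ (d : ℕ) (α : Fin d → Torus) (δ : ℝ), 0 < δ ∧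
    ∀ n : ℕ, 0 < n → (∑ i, ‖n • α i‖) < δ → n ∈ A

instance torus_nhdsWithin_neBot : Filter.NeBot (nhdsWithin (0 : Torus) {(0 : Torus)}ᶜ) := by
  rw [← mem_closure_iff_nhdsWithin_neBot]
  have htend : Filter.Tendsto (fun k : ℕ => ((((k : ℝ) + 2)⁻¹ : ℝ) : Torus)) atTop
      (nhds (0 : Torus)) := by
    have h1 : Filter.Tendsto (fun k : ℕ => (((k : ℝ) + 2)⁻¹ : ℝ)) atTop (nhds 0) := by
      apply Filter.Tendsto.inv_tendsto_atTop
      exact Filter.tendsto_atTop_add_const_right _ 2 tendsto_natCast_atTop_atTop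
    have := (AddCircle.continuous_mk' (1 : ℝ)).tendsto 0 |>.comp h1
    exact this
  refine mem_closure_of_tendsto htend (Filter.Eventually.of_forall fun k => ?_)
  simp only [Set.mem_compl_iff, Set.mem_singleton_iff]
  intro h
  rw [AddCircle.coe_eq_zero_iff] at h
  obtain ⟨m, hm⟩ := h
  have h0 : (0 : ℝ) < ((k : ℝ) + 2)⁻¹ := by positivity
  have h1 : ((k : ℝ) + 2)⁻¹ < 1 := by
    rw [inv_lt_one_iff₀]; right; linarith [Nat.cast_nonneg (α := ℝ) k]
  rw [zsmul_eq_mul, mul_one] at hm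
  have hm0 : (0 : ℝ) < (m : ℝ) := hm ▸ h0
  have hm1 : (m : ℝ) < 1 := hm ▸ h1
  have : (0 : ℤ) < m := by exact_mod_cast hm0
  have : m < 1 := by exact_mod_cast hm1
  omega

open MeasureTheory in
theorem exists_beta_far_infinitely_often (n : ℕ → ℕ) (hn : ∀ i, 0 < n i) :
    ∃ β : ℝ, Irrational β ∧
      ∀ N : ℕ, ∃ i : ℕ, N ≤ i ∧ 1 / 3 < ‖(((n i : ℝ) * β : ℝ) : Torus)‖ := by
  set B : Set Torus := {x | 1 / 3 < ‖x‖} with hB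
  have hBopen : IsOpen B := isOpen_lt continuous_const continuous_norm
  have hBne : B.Nonempty := by
    refine ⟨((1 / 2 : ℝ) : Torus), ?_⟩
    have h2 : ‖((1 / 2 : ℝ) : Torus)‖ = |(1 / 2 : ℝ) - round ((1 : ℝ)⁻¹ * (1 / 2 : ℝ)) * 1| :=
      AddCircle.norm_eq 1
    simp only [hB, Set.mem_setOf_eq, h2]
    rw [show round ((1 : ℝ)⁻¹ * (1 / 2 : ℝ)) = 1 by norm_num [round_eq]]
    push_cast
    rw [show |(1 / 2 : ℝ) - 1 * 1| = 1 / 2 by rw [abs_sub_comm]; norm_num]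
    norm_num
  have hc : 0 < volume B := hBopen.measure_pos volume hBne
  set D : ℕ → Set Torus := fun i => (fun x : Torus => (n i : ℤ) • x) ⁻¹' B with hD
  have hDmeas : ∀ i, MeasurableSet (D i) := fun i =>
    (hBopen.measurableSet).preimage (measurable_const_smul _)
  have hDvol : ∀ i, volume (D i) = volume B := fun i =>
    (MeasureTheory.Measure.measurePreserving_zsmul volume
      (by exact_mod_cast (hn i).ne' : ((n i : ℤ)) ≠ 0)).measure_preimage
      hBopen.measurableSet.nullMeasurableSet
  set E : ℕ → Set Torus := fun N => ⋃ i, ⋃ (_ : N ≤ i), D i with hE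
  have hEmeas : ∀ N, MeasurableSet (E N) :=
    fun N => MeasurableSet.iUnion fun i => MeasurableSet.iUnion fun _ => hDmeas i
  have hEanti : Antitone E := fun a b hab =>
    Set.iUnion₂_subset fun i hi =>
      Set.subset_iUnion₂ (s := fun i (_ : a ≤ i) => D i) i (hab.trans hi)
  have hEc : ∀ N, volume B ≤ volume (E N) := fun N => by
    rw [← hDvol N]
    exact measure_mono (Set.subset_iUnion₂ (s := fun i (_ : N ≤ i) => D i) N le_rfl)
  set L : Set Torus := ⋂ N, E N with hL
  have hLvol : volume B ≤ volume L := by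
    rw [hL, Directed.measure_iInter (fun N => (hEmeas N).nullMeasurableSet)
      (Antitone.directed_ge hEanti) ⟨0, measure_ne_top _ _⟩]
    exact le_iInf hEc
  set Q : Set Torus := Set.range (fun q : ℚ => ((q : ℝ) : Torus)) with hQ
  have hQ0 : volume Q = 0 := (Set.countable_range _).measure_zero volume
  have hLQ : volume (L \ Q) ≠ 0 := by
    have hle : volume B ≤ volume (L \ Q) := by
      calc volume B ≤ volume L := hLvol
        _ ≤ volume (L \ Q) + volume Q := by
            refine le_trans (measure_mono ?_) (measure_union_le _ _)
            exact fun x hx => by by_cases h : x ∈ Q <;> simp [h, hx]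
        _ = volume (L \ Q) := by rw [hQ0, add_zero]
    exact fun h => absurd (h ▸ hle) (by simpa using hc.ne')
  obtain ⟨x, hxL, hxQ⟩ := MeasureTheory.nonempty_of_measure_ne_zero hLQ
  obtain ⟨β, rfl⟩ : ∃ β : ℝ, ((β : ℝ) : Torus) = x := QuotientAddGroup.mk_surjective x
  refine ⟨β, ?_, ?_⟩
  · rintro ⟨q, rfl⟩
    exact hxQ ⟨q, rfl⟩
  · intro N
    have hx : (β : Torus) ∈ E N := Set.mem_iInter.mp hxL N
    obtain ⟨i, hi, hmem⟩ := Set.mem_iUnion₂.mp hx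
    refine ⟨i, hi, ?_⟩
    have heq : (((n i : ℝ) * β : ℝ) : Torus) = (n i : ℤ) • ((β : ℝ) : Torus) := by
      rw [← AddCircle.coe_zsmul]
      norm_num
    rw [heq]
    exact hmem
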